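/- arXiv:1803.03956 — 2 statements merged into one kernel-verified Lean document; each statement's English description precedes it below -/
import Mathlib

section
/- Every Codazzi 2-tensor T on a Riemannian manifold (M,g) commutes with the Ricci tensor at every point; that is, viewing T and Ric as symmetric endomorphisms of each tangent space via the metric, T ∘ Ric = Ric ∘ T. -/
/-- frame-component formalization at a point.
`T i j` are the components of a symmetric Codazzi 2-tensor in an orthonormal frame,
`R a b i j = g(R(e_a,e_b)e_i, e_j)` the components of the curvature tensor with its standard
symmetries, `DDT a b i j = (∇²_{e_a,e_b} T)(e_i,e_j)` the second covariant derivative.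
The Ricci commutation identity `hRicciId` expresses `∇²_{a,b} - ∇²_{b,a}` through the curvature;
`hCodazzi2` is the covariant derivative of the Codazzi equation `(∇_a T)(b,·) = (∇_b T)(a,·)`.
With `Ric k j = ∑ m, R k m m j`, the conclusion is that `T` and `Ric`, viewed as endomorphisms,
commute: `T ∘ Ric = Ric ∘ T`. -/
theorem codazzi_commutes_with_ricci (n : ℕ) (T : Fin n → Fin n → ℝ)
    (hT : ∀ i j, T i j = T j i)
    (R : Fin n → Fin n → Fin n → Fin n → ℝ)
    (hR1 : ∀ a b i j, R a b i j = -R b a i j)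
    (hR2 : ∀ a b i j, R a b i j = -R a b j i)
    (hR3 : ∀ a b i j, R a b i j = R i j a b)
    (hBianchi : ∀ a b i j, R a b i j + R b i a j + R i a b j = 0)
    (DDT : Fin n → Fin n → Fin n → Fin n → ℝ)
    (hRicciId : ∀ a b i j, DDT a b i j - DDT b a i j
        = -(∑ k, R a b i k * T k j) - ∑ k, R a b j k * T i k)
    (hCodazzi2 : ∀ a b i j, DDT a b i j = DDT a i b j)
    (hDDsym : ∀ a b i j, DDT a b i j = DDT a b j i) :
    ∀ i j, (∑ k, T i k * (∑ m, R k m m j)) = ∑ k, (∑ m, R i m m k) * T k j := by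
  -- Ricci tensor symmetry
  have hRic : ∀ p q, (∑ m, R p m m q) = ∑ m, R q m m p := by
    intro p q
    refine Finset.sum_congr rfl fun m _ => ?_
    rw [hR3 p m m q, hR1 m q p m, hR2 q m p m, neg_neg]
  -- contraction of antisymmetric with symmetric vanishes
  have hzero : ∀ p q, (∑ a, ∑ k, R p q a k * T a k) = 0 := by
    intro p q
    have h1 : (∑ a, ∑ k, R p q a k * T a k) = -∑ a, ∑ k, R p q a k * T a k := by
      nth_rewrite 1 [Finset.sum_comm]
      rw [← Finset.sum_neg_distrib]
      refine Finset.sum_congr rfl fun x _ => ?_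
      rw [← Finset.sum_neg_distrib]
      refine Finset.sum_congr rfl fun a _ => ?_
      rw [hR2 p q x a, hT x a]; ring
    linarith
  -- A p q := ∑ a, DDT p a a q is symmetric in p,q
  have hA : ∀ p q, (∑ a, DDT p a a q) = ∑ a, DDT q a a p := by
    intro p q
    have e : ∀ r s : Fin n, (∑ a, DDT r a a s) = ∑ a, DDT r s a a := fun r s =>
      Finset.sum_congr rfl fun a _ => by rw [hDDsym r a a s, hCodazzi2 r a s a]
    rw [e p q, e q p]
    have h2 : (∑ a, DDT p q a a) - ∑ a, DDT q p a a
        = -2 * ∑ a, ∑ k, R p q a k * T a k := by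
      rw [← Finset.sum_sub_distrib, Finset.mul_sum]
      refine Finset.sum_congr rfl fun a _ => ?_
      rw [hRicciId p q a a]
      have hTk : (∑ k, R p q a k * T k a) = ∑ k, R p q a k * T a k :=
        Finset.sum_congr rfl fun k _ => by rw [hT k a]
      rw [hTk]; ring
    rw [hzero p q] at h2
    linarith
  -- B p q := ∑ a, DDT a p a q is symmetric in p,q
  have hB : ∀ p q, (∑ a, DDT a p a q) = ∑ a, DDT a q a p := by
    intro p q
    refine Finset.sum_congr rfl fun a _ => ?_
    rw [← hCodazzi2 a a p q, hDDsym a a p q, hCodazzi2 a a q p]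
  -- contracted Ricci identity
  have hC : ∀ p q, (∑ a, DDT a p a q) - (∑ a, DDT p a a q)
      = -(∑ a, ∑ k, R a p a k * T k q) - ∑ a, ∑ k, R a p q k * T a k := by
    intro p q
    rw [← Finset.sum_sub_distrib, ← Finset.sum_neg_distrib, ← Finset.sum_sub_distrib]
    exact Finset.sum_congr rfl fun a _ => hRicciId a p a q
  -- the Q-term is symmetric (via first Bianchi)
  have hQ : ∀ p q, (∑ a, ∑ k, R a p q k * T a k) - (∑ a, ∑ k, R a q p k * T a k) = 0 := by
    intro p q
    have key : (∑ a, ∑ k, R a p q k * T a k) - (∑ a, ∑ k, R a q p k * T a k)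
        = -(∑ a, ∑ k, R p q a k * T a k) := by
      rw [← Finset.sum_sub_distrib, ← Finset.sum_neg_distrib]
      refine Finset.sum_congr rfl fun a _ => ?_
      rw [← Finset.sum_sub_distrib, ← Finset.sum_neg_distrib]
      refine Finset.sum_congr rfl fun k _ => ?_
      have hb := hBianchi a p q k
      have h1 := hR1 q a p k
      linear_combination (T a k) * hb - (T a k) * h1
    rw [key, hzero p q, neg_zero]
  -- the P-term is the Ricci contraction
  have hP : ∀ p q, (∑ a, ∑ k, R a p a k * T k q)
      = -∑ k, (∑ m, R p m m k) * T k q := by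
    intro p q
    rw [Finset.sum_comm, ← Finset.sum_neg_distrib]
    refine Finset.sum_congr rfl fun k _ => ?_
    rw [← Finset.sum_mul]
    have hcol : (∑ a, R a p a k) = -∑ m, R p m m k := by
      rw [← Finset.sum_neg_distrib]
      exact Finset.sum_congr rfl fun a _ => hR1 a p a k
    rw [hcol]; ring
  intro i j
  have hgoalL : (∑ k, T i k * (∑ m, R k m m j)) = ∑ k, (∑ m, R j m m k) * T k i := by
    refine Finset.sum_congr rfl fun k _ => ?_
    rw [hT i k, hRic k j]; ring
  rw [hgoalL]
  linarith [hP i j, hP j i, hA i j, hB i j, hQ i j, hC i j, hC j i]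
end

section
/- (Okumura's inequality) Let A be a real symmetric n×n matrix with trace zero, n ≥ 2. Then trace(A³) ≥ -((n-2)/√(n(n-1))) · ‖A‖³, where ‖A‖² = trace(A²). -/
/-!
Diagonalising `A` reduces the claim to its eigenvalues `x₁, …, xₙ`, which sum to zero. Put
`a = ‖x‖ / √(n(n-1))`. Cauchy–Schwarz applied to the other coordinates gives
`n xᵢ² ≤ (n-1) ‖x‖²`, i.e. `xᵢ ≥ -(n-1) a`, so every term `(xᵢ - a)² (xᵢ + (n-1) a)` is
nonnegative. Expanding their sum with `∑ xᵢ = 0` gives exactly `∑ xᵢ³ ≥ -(n-2) a ‖x‖²`.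
Equality holds at `x = (a, …, a, -(n-1) a)`.
-/

open Matrix

theorem Matrix.IsHermitian.trace_pow_eq_sum_eigenvalues_pow {n 𝕜 : Type*} [Fintype n]
    [DecidableEq n] [RCLike 𝕜] {A : Matrix n n 𝕜} (hA : A.IsHermitian) (k : ℕ) :
    (A ^ k).trace = ∑ i, (hA.eigenvalues i : 𝕜) ^ k := by
  conv_lhs => rw [hA.spectral_theorem]
  rw [← map_pow, Unitary.conjStarAlgAut_apply, trace_mul_cycle,
    Unitary.coe_star_mul_self, one_mul, diagonal_pow, trace_diagonal]
  rfl

theorem card_mul_sq_le_of_sum_eq_zero {ι : Type*} [Fintype ι] {x : ι → ℝ}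
    (h0 : ∑ i, x i = 0) (i : ι) :
    Fintype.card ι * x i ^ 2 ≤ (Fintype.card ι - 1) * ∑ j, x j ^ 2 := by
  classical
  have hsum : ∑ j ∈ Finset.univ.erase i, x j = -x i := by
    linarith [Finset.add_sum_erase Finset.univ x (Finset.mem_univ i)]
  have hsq : ∑ j ∈ Finset.univ.erase i, x j ^ 2 = ∑ j, x j ^ 2 - x i ^ 2 := by
    linarith [Finset.add_sum_erase Finset.univ (fun j => x j ^ 2) (Finset.mem_univ i)]
  have hcard : ((Finset.univ.erase i).card : ℝ) = Fintype.card ι - 1 := by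
    rw [Finset.card_erase_of_mem (Finset.mem_univ i), Finset.card_univ,
      Nat.cast_pred (Fintype.card_pos_iff.mpr ⟨i⟩)]
  have hcs := sq_sum_le_card_mul_sum_sq (s := Finset.univ.erase i) (f := x)
  rw [hsum, hsq, hcard] at hcs
  nlinarith

theorem le_sum_pow_three_of_forall_neg_le {ι : Type*} [Fintype ι] {x : ι → ℝ}
    (h0 : ∑ i, x i = 0) (a : ℝ) {b : ℝ} (hb : ∀ i, -b ≤ x i) :
    (2 * a - b) * ∑ i, x i ^ 2 - Fintype.card ι * a ^ 2 * b ≤ ∑ i, x i ^ 3 := by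
  have hnonneg : 0 ≤ ∑ i, (x i - a) ^ 2 * (x i + b) :=
    Finset.sum_nonneg fun i _ => mul_nonneg (sq_nonneg _) (by linarith [hb i])
  have hexpand : ∑ i, (x i - a) ^ 2 * (x i + b) = ∑ i, x i ^ 3 + (b - 2 * a) * ∑ i, x i ^ 2
      + (a ^ 2 - 2 * a * b) * ∑ i, x i + Fintype.card ι * (a ^ 2 * b) := by
    rw [← Finset.card_univ, ← nsmul_eq_mul, ← Finset.sum_const, Finset.mul_sum, Finset.mul_sum,
      ← Finset.sum_add_distrib, ← Finset.sum_add_distrib, ← Finset.sum_add_distrib]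
    exact Finset.sum_congr rfl fun i _ => by ring
  rw [hexpand, h0] at hnonneg
  linarith

theorem okumura_inequality_of_sum_eq_zero {ι : Type*} [Fintype ι] (hcard : 2 ≤ Fintype.card ι)
    {x : ι → ℝ} (h0 : ∑ i, x i = 0) :
    -((Fintype.card ι - 2) / √(Fintype.card ι * (Fintype.card ι - 1))) *
      √(∑ i, x i ^ 2) ^ 3 ≤ ∑ i, x i ^ 3 := by
  have hn : (2 : ℝ) ≤ Fintype.card ι := by exact_mod_cast hcard
  set n : ℝ := (Fintype.card ι : ℝ)
  set s := ∑ i, x i ^ 2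
  set c := √(n * (n - 1))
  set r := √s
  have hc : 0 < c := Real.sqrt_pos.mpr (by nlinarith)
  have hc2 : c ^ 2 = n * (n - 1) := Real.sq_sqrt (by nlinarith)
  have hr : 0 ≤ r := Real.sqrt_nonneg s
  have hr2 : r ^ 2 = s := Real.sq_sqrt (Finset.sum_nonneg fun i _ => sq_nonneg (x i))
  have hb : ∀ i, -((n - 1) * (r / c)) ≤ x i := by
    refine fun i => (abs_le_of_sq_le_sq' ?_ (mul_nonneg (by linarith) (div_nonneg hr hc.le))).1
    have := card_mul_sq_le_of_sum_eq_zero h0 i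
    rw [mul_pow, div_pow, hc2, hr2]
    field_simp
    nlinarith
  calc -((n - 2) / c) * r ^ 3
      = (2 * (r / c) - (n - 1) * (r / c)) * s - n * (r / c) ^ 2 * ((n - 1) * (r / c)) := by
        field_simp
        rw [← hr2]
        linear_combination (-r ^ 3) * hc2
    _ ≤ ∑ i, x i ^ 3 := le_sum_pow_three_of_forall_neg_le h0 (r / c) hb

/-- Okumura's inequality.
For a traceless symmetric real `n × n` matrix `A` (`n ≥ 2`),
`trace (A³) ≥ -((n-2)/√(n(n-1))) ‖A‖³`, where `‖A‖ = √(trace (A²))` is the Frobenius norm. -/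
theorem okumura_inequality (n : ℕ) (hn : 2 ≤ n)
    (A : Matrix (Fin n) (Fin n) ℝ) (hA : A.IsSymm) (htr : A.trace = 0) :
    (A * A * A).trace ≥
      -(((n : ℝ) - 2) / Real.sqrt (n * (n - 1))) * (Real.sqrt ((A * A).trace)) ^ 3 := by
  have hH : A.IsHermitian := isHermitian_iff_isSymm.mpr hA
  have htrace (k : ℕ) : (A ^ k).trace = ∑ i, hH.eigenvalues i ^ k :=
    hH.trace_pow_eq_sum_eigenvalues_pow k
  have hsum : ∑ i, hH.eigenvalues i = 0 := by simpa [← htr] using (htrace 1).symm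
  rw [← pow_three', ← sq, htrace, htrace, ge_iff_le]
  simpa using okumura_inequality_of_sum_eq_zero (by simpa using hn) hsum
end
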